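/- arXiv:2311.04324 — 3 statements merged into one kernel-verified Lean document; each statement's English description precedes it below -/
import Mathlib

section
/- Let q be an odd positive integer and let χ be a Dirichlet character mod q with conductor f_χ. Then (1/φ(q))·∑_{v mod q, gcd(v,q)=1} χ(v + 1) equals 0 if f_χ is not squarefree, and equals (−1)^{ω(f_χ)}·α(q)/∏_{ℓ ∣ f_χ} (ℓ − 2) if f_χ is squarefree, where the product runs over the primes ℓ dividing f_χ. -/
/-- `α(q) = ∏_{ℓ ∣ q} (1 - 1/(ℓ-1))`, the product over distinct primes dividing `q`. -/
noncomputable def alpha (q : ℕ) : ℝ := ∏ ℓ ∈ q.primeFactors, (1 - 1 / ((ℓ : ℝ) - 1))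

/-- `ρ_χ = (1/φ(q)) ∑_{v mod q, gcd(v,q)=1} χ(v + 1)`. -/
noncomputable def rho (q : ℕ) (χ : DirichletCharacter ℂ q) : ℂ :=
  (q.totient : ℂ)⁻¹ *
    ∑ v ∈ Finset.range q, if Nat.gcd v q = 1 then χ ((v : ZMod q) + 1) else 0

/-!
Möbius inversion of the coprimality condition turns `φ(q) ρ_χ` into
`∑_{d ∣ q} μ(d) ∑_{v ≡ 1 (d)} χ(v)`. The inner sum is a character sum over the kernel of
`(ℤ/q)ˣ → (ℤ/d)ˣ`, so it equals the size `φ(q)/φ(d)` of that kernel when `χ` is trivial on it,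
i.e. when `f_χ ∣ d`, and vanishes otherwise. Hence `ρ_χ = ∑_{f_χ ∣ d ∣ q} μ(d)/φ(d)`: this is
`0` unless `f_χ` is squarefree, and otherwise, indexing squarefree `d` by their sets of prime
factors, it factors as `∏_{ℓ ∣ f_χ} (-1/(ℓ-1)) · ∏_{ℓ ∣ q, ℓ ∤ f_χ} (1 - 1/(ℓ-1))`. Finally
`-1/(ℓ-1) = -(1 - 1/(ℓ-1))/(ℓ-2)` for `ℓ ≠ 2`, which is where the oddness of `q` enters.
-/

open Finset ArithmeticFunction
open scoped ArithmeticFunction.Moebius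

theorem sum_moebius_divisors_filter_dvd {R : Type*} [Ring R] {n : ℕ} (hn : n ≠ 0) (v : ℕ) :
    ∑ d ∈ n.divisors with d ∣ v, (μ d : R) = if v.Coprime n then 1 else 0 := by
  have hdiv : {d ∈ n.divisors | d ∣ v} = (v.gcd n).divisors := by
    ext d
    simp [Nat.dvd_gcd_iff, hn, Nat.gcd_ne_zero_right hn, and_comm]
  have := congrArg (· (v.gcd n)) (coe_moebius_mul_coe_zeta (R := R))
  simp only [coe_mul_zeta_apply, intCoe_apply, one_apply] at this
  rw [hdiv, this]

theorem sum_filter_coprime_eq_sum_moebius {R : Type*} [Ring R] {n : ℕ} (hn : n ≠ 0)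
    (s : Finset ℕ) (g : ℕ → R) :
    ∑ v ∈ s with v.Coprime n, g v = ∑ d ∈ n.divisors, (μ d : R) * ∑ v ∈ s with d ∣ v, g v := by
  simp_rw [mul_sum, sum_filter]
  rw [sum_comm]
  refine sum_congr rfl fun v _ => ?_
  rw [← boole_mul, ← sum_moebius_divisors_filter_dvd hn v, sum_filter, sum_mul]
  simp_rw [ite_mul, zero_mul]

theorem ZMod.totient_mul_card_ker_unitsMap {n d : ℕ} [NeZero n] (hd : d ∣ n) :
    d.totient * Nat.card (ZMod.unitsMap hd).ker = n.totient := by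
  have : NeZero d := ⟨by rintro rfl; exact NeZero.ne n (zero_dvd_iff.mp hd)⟩
  rw [← ZMod.card_units_eq_totient, ← ZMod.card_units_eq_totient, ← Nat.card_eq_fintype_card,
    ← Nat.card_eq_fintype_card, (ZMod.unitsMap hd).ker.card_eq_card_quotient_mul_card_subgroup,
    Nat.card_congr
      (QuotientGroup.quotientKerEquivOfSurjective _ (ZMod.unitsMap_surjective hd)).toEquiv]

theorem ZMod.sum_range_filter_dvd {M : Type*} [AddCommMonoid M] {n d : ℕ} [NeZero n]
    (hd : d ∣ n) (g : ZMod n → M) :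
    ∑ v ∈ range n with d ∣ v, g (v + 1)
      = ∑ y : ZMod n with ZMod.castHom hd (ZMod d) y = 1, g y := by
  have key (v : ℕ) : ZMod.castHom hd (ZMod d) ((v : ZMod n) + 1) = 1 ↔ d ∣ v := by
    rw [map_add, map_natCast, map_one, add_eq_right, ZMod.natCast_eq_zero_iff]
  refine sum_nbij' (fun v => (v : ZMod n) + 1) (fun y => (y - 1).val) ?_ ?_ ?_ ?_
    (fun _ _ => rfl)
  · intro v hv
    simp only [mem_filter, mem_range, mem_univ, true_and] at hv ⊢
    exact (key v).mpr hv.2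
  · intro y hy
    simp only [mem_filter, mem_range, mem_univ, true_and] at hy ⊢
    refine ⟨ZMod.val_lt _, (key _).mp ?_⟩
    rwa [ZMod.natCast_zmod_val, sub_add_cancel]
  · intro v hv
    simp only [mem_filter, mem_range] at hv
    simp [ZMod.val_cast_of_lt hv.1]
  · intro y _
    simp

namespace DirichletCharacter

variable {R : Type*} {n d : ℕ} [NeZero n]

theorem ker_unitsMap_le_ker_iff_conductor_dvd [CommMonoidWithZero R]
    (χ : DirichletCharacter R n) (hd : d ∣ n) :
    (ZMod.unitsMap hd).ker ≤ χ.toUnitHom.ker ↔ χ.conductor ∣ d :=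
  (factorsThrough_iff_ker_unitsMap hd).symm.trans (mem_conductorSet_iff_conductor_dvd χ hd)

theorem sum_ker_unitsMap [CommRing R] [IsDomain R] (χ : DirichletCharacter R n) (hd : d ∣ n) :
    ∑ u : (ZMod.unitsMap hd).ker, χ ((u : (ZMod n)ˣ) : ZMod n)
      = if χ.conductor ∣ d then (Nat.card (ZMod.unitsMap hd).ker : R) else 0 := by
  classical
  let f : (ZMod.unitsMap hd).ker →* R :=
    (Units.coeHom R).comp (χ.toUnitHom.comp (ZMod.unitsMap hd).ker.subtype)
  have hf : f = 1 ↔ χ.conductor ∣ d := by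
    rw [← ker_unitsMap_le_ker_iff_conductor_dvd χ hd, DFunLike.ext_iff, SetLike.le_def,
      Subtype.forall]
    simp only [f, MonoidHom.mem_ker, MonoidHom.coe_comp, Function.comp_apply,
      Subgroup.coe_subtype, Units.coeHom_apply, MonoidHom.one_apply, Units.val_eq_one]
  convert sum_hom_units f using 1
  · simp [f]
  · simp [hf, Nat.card_eq_fintype_card]

theorem sum_filter_castHom_eq_one [CommSemiring R] (χ : DirichletCharacter R n) (hd : d ∣ n) :
    ∑ y : ZMod n with ZMod.castHom hd (ZMod d) y = 1, χ y
      = ∑ u : (ZMod.unitsMap hd).ker, χ ((u : (ZMod n)ˣ) : ZMod n) := by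
  classical
  rw [← sum_subtype {u | ZMod.unitsMap hd u = 1} (by simp [MonoidHom.mem_ker])
      (fun u : (ZMod n)ˣ => χ u),
    ← sum_preimage Units.val _ Units.val_injective.injOn _
      fun y _ hy => χ.map_nonunit fun h => hy ⟨h.unit, rfl⟩]
  congr 1
  ext u
  simp only [mem_preimage, mem_filter, mem_univ, true_and]
  rw [Units.ext_iff, ZMod.unitsMap_val, Units.val_one, ZMod.castHom_apply]

theorem sum_range_filter_dvd_apply_add_one [CommRing R] [IsDomain R]
    (χ : DirichletCharacter R n) (hd : d ∣ n) :
    ∑ v ∈ range n with d ∣ v, χ (v + 1)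
      = if χ.conductor ∣ d then (Nat.card (ZMod.unitsMap hd).ker : R) else 0 := by
  rw [ZMod.sum_range_filter_dvd hd χ, χ.sum_filter_castHom_eq_one hd, χ.sum_ker_unitsMap hd]

end DirichletCharacter

theorem rho_eq_sum_divisors_filter_conductor_dvd {q : ℕ} [NeZero q]
    (χ : DirichletCharacter ℂ q) :
    rho q χ = ∑ d ∈ q.divisors with χ.conductor ∣ d, (μ d : ℂ) / d.totient := by
  simp_rw [rho, ← Nat.coprime_iff_gcd_eq_one, ← sum_filter]
  rw [sum_filter_coprime_eq_sum_moebius (NeZero.ne q), mul_sum]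
  refine (sum_congr rfl fun d hd => ?_).trans (sum_filter _ _).symm
  have hdq := Nat.dvd_of_mem_divisors hd
  have hcard : (d.totient : ℂ) * Nat.card (ZMod.unitsMap hdq).ker = q.totient := by
    exact_mod_cast ZMod.totient_mul_card_ker_unitsMap hdq
  rw [χ.sum_range_filter_dvd_apply_add_one hdq]
  split_ifs
  · have : (Nat.card (ZMod.unitsMap hdq).ker : ℂ) ≠ 0 := Nat.cast_ne_zero.mpr Nat.card_pos.ne'
    rw [← hcard]
    field_simp
  · simp

theorem Nat.sum_divisors_eq_sum_powerset_primeFactors {M : Type*} [AddCommMonoid M] {n : ℕ}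
    (hn : n ≠ 0) {G : ℕ → M} (hG : ∀ d, ¬ Squarefree d → G d = 0) :
    ∑ d ∈ n.divisors, G d = ∑ t ∈ n.primeFactors.powerset, G (∏ p ∈ t, p) := by
  rw [← sum_filter_of_ne fun d _ => Not.imp_symm (hG d), Nat.sum_divisors_filter_squarefree hn,
    Nat.factors_eq, List.toFinset_coe, Nat.toFinset_factors]
  simp_rw [prod_val]
  rfl

theorem Finset.sum_powerset_filter_superset_prod {ι R : Type*} [DecidableEq ι] [CommSemiring R]
    {F Q : Finset ι} (hFQ : F ⊆ Q) (g : ι → R) :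
    ∑ t ∈ Q.powerset with F ⊆ t, ∏ p ∈ t, g p = (∏ p ∈ F, g p) * ∏ p ∈ Q \ F, (g p + 1) := by
  have hsplit : ∏ p ∈ Q, (g p + if p ∉ F then 1 else 0)
      = (∏ p ∈ F, g p) * ∏ p ∈ Q \ F, (g p + 1) := by
    rw [← prod_sdiff hFQ, mul_comm]
    congr 1
    · exact prod_congr rfl fun p hp => by rw [if_neg (not_not.mpr hp), add_zero]
    · exact prod_congr rfl fun p hp => by rw [if_pos (mem_sdiff.mp hp).2]
  rw [← hsplit, prod_add, sum_filter]
  refine sum_congr rfl fun t ht => ?_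
  rw [prod_ite_zero, prod_const_one]
  have : (∀ p ∈ Q \ t, p ∉ F) ↔ F ⊆ t := by
    refine ⟨fun h p hp => ?_, fun h p hp hpF => (mem_sdiff.mp hp).2 (h hpF)⟩
    by_contra hpt
    exact h p (mem_sdiff.mpr ⟨hFQ hp, hpt⟩) hp
  simp only [this, mul_ite, mul_one, mul_zero]

theorem moebius_div_totient_prod_primes {K : Type*} [Field K] {t : Finset ℕ}
    (ht : ∀ p ∈ t, p.Prime) :
    (μ (∏ p ∈ t, p) : K) / (∏ p ∈ t, p).totient = ∏ p ∈ t, -1 / ((p : K) - 1) := by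
  have hpos : 0 < ∏ p ∈ t, p := prod_pos fun p hp => (ht p hp).pos
  rw [isMultiplicative_moebius.map_prod_of_prime t ht, Nat.totient_eq_div_primeFactors_mul,
    Nat.primeFactors_prod ht, Nat.div_self hpos, one_mul, prod_div_distrib]
  push_cast [prod_congr rfl fun p hp => moebius_apply_prime (ht p hp),
    prod_congr rfl fun p hp => Nat.cast_sub (ht p hp).one_le]
  rfl

theorem sum_divisors_filter_dvd_moebius_div_totient {K : Type*} [Field K] {n f : ℕ} (hn : n ≠ 0)
    (hfn : f ∣ n) (hf : Squarefree f) :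
    ∑ d ∈ n.divisors with f ∣ d, (μ d : K) / d.totient
      = (∏ p ∈ f.primeFactors, -1 / ((p : K) - 1))
        * ∏ p ∈ n.primeFactors \ f.primeFactors, (1 - 1 / ((p : K) - 1)) := by
  simp_rw [show ∀ p : ℕ, 1 - 1 / ((p : K) - 1) = -1 / ((p : K) - 1) + 1 from fun p => by ring]
  rw [sum_filter, Nat.sum_divisors_eq_sum_powerset_primeFactors hn
      fun d hd => by simp [moebius_eq_zero_of_not_squarefree hd],
    ← sum_powerset_filter_superset_prod (Nat.primeFactors_mono hfn hn), sum_filter]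
  refine sum_congr rfl fun t ht => ?_
  have hprime : ∀ p ∈ t, p.Prime := fun p hp =>
    Nat.prime_of_mem_primeFactors (mem_powerset.mp ht hp)
  have hdvd : f ∣ ∏ p ∈ t, p ↔ f.primeFactors ⊆ t := by
    conv_lhs => rw [← Nat.prod_primeFactors_of_squarefree hf]
    rw [Nat.prod_primeFactors_dvd_iff (prod_ne_zero_iff.mpr fun p hp => (hprime p hp).ne_zero),
      Nat.primeFactors_prod hprime]
  simp only [hdvd, moebius_div_totient_prod_primes hprime]

theorem prod_neg_one_div_sub_one_mul_prod_sdiff {K : Type*} [Field K] [CharZero K]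
    {F Q : Finset ℕ} (hFQ : F ⊆ Q) (hF : ∀ p ∈ F, 3 ≤ p) :
    (∏ p ∈ F, -1 / ((p : K) - 1)) * ∏ p ∈ Q \ F, (1 - 1 / ((p : K) - 1))
      = (-1) ^ F.card * (∏ p ∈ Q, (1 - 1 / ((p : K) - 1))) / ∏ p ∈ F, ((p : K) - 2) := by
  have hterm : ∀ p ∈ F, -1 / ((p : K) - 1) = -1 * (1 - 1 / ((p : K) - 1)) / ((p : K) - 2) := by
    intro p hp
    have := hF p hp
    have h1 : (p : K) - 1 ≠ 0 := sub_ne_zero.mpr (by exact_mod_cast (by omega : p ≠ 1))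
    have h2 : (p : K) - 2 ≠ 0 := sub_ne_zero.mpr (by exact_mod_cast (by omega : p ≠ 2))
    field_simp
    ring
  rw [prod_congr rfl hterm, prod_div_distrib, prod_mul_distrib, prod_const, ← prod_sdiff hFQ]
  ring

theorem stmt8 (q : ℕ) (hq : Odd q) (χ : DirichletCharacter ℂ q) :
    (¬ Squarefree χ.conductor → rho q χ = 0) ∧
    (Squarefree χ.conductor →
      rho q χ = (-1 : ℂ) ^ (χ.conductor.primeFactors.card) * (alpha q : ℂ) /
        ∏ ℓ ∈ χ.conductor.primeFactors, ((ℓ : ℂ) - 2)) := by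
  have : NeZero q := ⟨hq.pos.ne'⟩
  have hfq := χ.conductor_dvd_level
  rw [rho_eq_sum_divisors_filter_conductor_dvd]
  refine ⟨fun hf => sum_eq_zero fun d hd => ?_, fun hf => ?_⟩
  · have hd_sq : ¬ Squarefree d := fun hd' => hf (hd'.squarefree_of_dvd (mem_filter.mp hd).2)
    simp [moebius_eq_zero_of_not_squarefree hd_sq]
  · have hthree : ∀ p ∈ χ.conductor.primeFactors, 3 ≤ p := fun p hp => by
      have hp2 := (Nat.prime_of_mem_primeFactors hp).two_le
      have hpodd := hq.of_dvd_nat ((Nat.dvd_of_mem_primeFactors hp).trans hfq)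
      rcases hpodd with ⟨k, rfl⟩
      omega
    rw [sum_divisors_filter_dvd_moebius_div_totient (NeZero.ne q) hfq hf,
      prod_neg_one_div_sub_one_mul_prod_sdiff (Nat.primeFactors_mono hfq (NeZero.ne q)) hthree,
      alpha]
    push_cast
    rfl
end

section
/- There exists a constant C such that for every prime ℓ ≥ 5, if w denotes the residue class mod ℓ² satisfying 16·w ≡ 9 (mod ℓ²), then #{(v₁, v₂) : v₁, v₂ units mod ℓ², (v₁² + v₁ + 1)·(v₂² + v₂ + 1) ≡ w (mod ℓ²)} ≥ 2ℓ²·(1 − C/√ℓ). -/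
/-!
Put `x = 2 v₁ + 1` and `y = 2 v₂ + 1`; the congruence becomes `(x² + 3) (y² + 3) = 9` in
`ZMod (ℓ ^ 2)`. If `x ≡ y ≡ 0 (mod ℓ)` then `x² = y² = 0` and the equation holds: these are
`ℓ²` solutions, the whole fibre over the singular point `(0, 0)` of the curve mod `ℓ`.
Away from it, `X = 1 / x` and `Y = 1 / y` turn the equation into the conic `3 (X² + Y²) = -1`.
It has a point mod `ℓ`, which lifts to `ZMod (ℓ ^ 2)` by Hensel's lemma, and projecting from
that point, every slope `t` that is not a root mod `ℓ` of a fixed nonzero polynomial of degree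
at most `11` gives a new solution, injectively in `t`: at least `ℓ (ℓ - 11)` more solutions.
Hence there are at least `2 ℓ² - 11 ℓ ≥ 2 ℓ² (1 - 6 / √ℓ)` of them.
-/

open Finset Polynomial

def IsSolution {R : Type*} [CommRing R] (v : R × R) : Prop :=
  IsUnit v.1 ∧ IsUnit v.2 ∧ 16 * ((v.1 ^ 2 + v.1 + 1) * (v.2 ^ 2 + v.2 + 1)) = 9

theorem AddMonoidHom.card_filter_comp_eq_mul {G H F : Type*} [AddGroup G] [Fintype G] [AddGroup H]
    [Fintype H] [DecidableEq H] [FunLike F G H] [AddMonoidHomClass F G H] (f : F)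
    (hf : Function.Surjective f) (Q : H → Prop) [DecidablePred Q] :
    #{g | Q (f g)} = #{g | f g = 0} * #{h | Q h} := by
  rw [card_eq_sum_card_fiberwise (f := f) (t := {h | Q h}) (fun g hg => by simpa using hg),
    sum_const_nat fun h hh => ?_, mul_comm]
  rw [filter_filter, ← card_fiber_eq_of_mem_range f (hf h) (hf 0)]
  congr 1
  ext g
  simp only [mem_filter, mem_univ, true_and, and_iff_right_iff_imp]
  rintro rfl
  simpa using hh

theorem Polynomial.card_le_card_filter_eval_ne_zero_add {R : Type*} [CommRing R] [IsDomain R]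
    [Fintype R] [DecidableEq R] {p : R[X]} (hp : p ≠ 0) :
    Fintype.card R ≤ #{x | p.eval x ≠ 0} + p.natDegree := by
  rw [← card_univ, ← card_filter_add_card_filter_not (fun x => p.eval x ≠ 0)]
  gcongr
  calc #{x | ¬p.eval x ≠ 0} ≤ #p.roots.toFinset :=
        card_le_card fun x hx => by simpa [hp] using hx
    _ ≤ p.natDegree := (Multiset.toFinset_card_le _).trans (card_roots' p)

theorem exists_add_mul_sq_eq_sq_add {R : Type*} [CommRing R] {r d : R} (h2r : IsUnit (2 * r))
    (hd : d ^ 2 = 0) : ∃ e, (r + d * e) ^ 2 = r ^ 2 + d := by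
  obtain ⟨e, he⟩ := h2r.exists_right_inv
  exact ⟨e, by linear_combination d * he + e ^ 2 * hd⟩

namespace ZMod

theorem isUnit_iff_castHom_ne_zero {p d : ℕ} [Fact p.Prime] (hd : d ≠ 0) (z : ZMod (p ^ d)) :
    IsUnit z ↔ castHom (dvd_pow_self p hd) (ZMod p) z ≠ 0 := by
  rw [← natCast_zmod_val z, isUnit_natCast_iff_not_dvd_pow Fact.out (Nat.pos_of_ne_zero hd),
    map_natCast, ne_eq, natCast_eq_zero_iff]

theorem pow_eq_zero_of_castHom_eq_zero {m d : ℕ} (hd : d ≠ 0) {z : ZMod (m ^ d)}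
    (hz : castHom (dvd_pow_self m hd) (ZMod m) z = 0) : z ^ d = 0 := by
  rw [← intCast_zmod_cast z] at hz ⊢
  rw [map_intCast, intCast_zmod_eq_zero_iff_dvd] at hz
  obtain ⟨k, hk⟩ := hz
  rw [hk, Int.cast_mul, mul_pow, Int.cast_natCast, ← Nat.cast_pow, natCast_self, zero_mul]

end ZMod

section Conic

variable {R : Type*} [CommRing R]

/-- `(conicNumX a b t, conicNumY a b t) / (t² + 1)` is the second intersection of the circle
`X² + Y² = a² + b²` with the line through `(a, b)` in the direction `(t, 1)`. -/
def conicNumX (a b t : R) : R := a - a * t ^ 2 - 2 * b * t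

def conicNumY (a b t : R) : R := b * t ^ 2 - 2 * a * t - b

theorem conicNumX_sq_add_conicNumY_sq (a b t : R) :
    conicNumX a b t ^ 2 + conicNumY a b t ^ 2 = (a ^ 2 + b ^ 2) * (t ^ 2 + 1) ^ 2 := by
  unfold conicNumX conicNumY
  ring

theorem sq_add_three_mul_sq_add_three_eq_nine {x y X Y q : R} (hX : IsUnit X) (hY : IsUnit Y)
    (hx : x * X = q) (hy : y * Y = q) (h : 3 * (X ^ 2 + Y ^ 2) = -q ^ 2) :
    (x ^ 2 + 3) * (y ^ 2 + 3) = 9 := by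
  refine ((hX.pow 2).mul (hY.pow 2)).mul_left_cancel ?_
  linear_combination (Y ^ 2 * (y ^ 2 + 3)) * ((x * X + q) * hx + h) -
    3 * Y ^ 2 * ((y * Y + q) * hy + h)

theorem eq_of_conicNum_cross_mul_eq {a b t₁ t₂ : R}
    (hX : (t₁ ^ 2 + 1) * conicNumX a b t₂ = (t₂ ^ 2 + 1) * conicNumX a b t₁)
    (hY : (t₁ ^ 2 + 1) * conicNumY a b t₂ = (t₂ ^ 2 + 1) * conicNumY a b t₁)
    (hu : IsUnit (2 * (t₁ ^ 2 + 1) * (a * t₂ + b))) : t₁ = t₂ := by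
  have h : 2 * (t₁ ^ 2 + 1) * (a * t₂ + b) * (t₁ - t₂) = 0 := by
    simp only [conicNumX, conicNumY] at hX hY
    linear_combination hX - t₁ * hY
  exact sub_eq_zero.mp (hu.mul_right_eq_zero.mp h)

/-- Its value at `t` is a unit exactly when `slopeSolution a b t` is defined, consists of units
and determines `t`. -/
noncomputable def slopeObstruction (a b : R) : R[X] :=
  (X ^ 2 + 1) * (C a * X + C b) * (C a - C a * X ^ 2 - C (2 * b) * X) *
    (C a - C a * X ^ 2 - C (2 * b) * X - (X ^ 2 + 1)) * (C b * X ^ 2 - C (2 * a) * X - C b) *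
    (C b * X ^ 2 - C (2 * a) * X - C b - (X ^ 2 + 1))

theorem eval_slopeObstruction (a b t : R) :
    (slopeObstruction a b).eval t = (t ^ 2 + 1) * (a * t + b) * conicNumX a b t *
      (conicNumX a b t - (t ^ 2 + 1)) * conicNumY a b t * (conicNumY a b t - (t ^ 2 + 1)) := by
  simp [slopeObstruction, conicNumX, conicNumY]

theorem map_eval_slopeObstruction {S : Type*} [CommRing S] (f : R →+* S) (a b t : R) :
    f ((slopeObstruction a b).eval t) = (slopeObstruction (f a) (f b)).eval (f t) := by
  simp [eval_slopeObstruction, conicNumX, conicNumY, map_ofNat]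

theorem natDegree_slopeObstruction_le (a b : R) : (slopeObstruction a b).natDegree ≤ 11 := by
  unfold slopeObstruction
  compute_degree

theorem slopeObstruction_ne_zero {F : Type*} [Field F] {a b : F} (h2 : (2 : F) ≠ 0)
    (hb : b ≠ 0) : slopeObstruction a b ≠ 0 := by
  have hcoeff : ∀ (p : F[X]) (n : ℕ), p.coeff n ≠ 0 → p ≠ 0 := fun p n h hp => h (by simp [hp])
  unfold slopeObstruction
  refine mul_ne_zero (mul_ne_zero (mul_ne_zero (mul_ne_zero (mul_ne_zero ?_ ?_) ?_) ?_) ?_) ?_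
  · exact hcoeff _ 0 (by simp)
  · exact hcoeff _ 0 (by simpa)
  · exact hcoeff _ 1 (by simpa [coeff_X, coeff_C] using And.intro h2 hb)
  · exact hcoeff _ 1 (by simpa [coeff_C, coeff_one] using And.intro h2 hb)
  · exact hcoeff _ 0 (by simpa [coeff_X, coeff_C])
  · intro h0
    have h₀ := congrArg (coeff · 0) h0
    have h₂ := congrArg (coeff · 2) h0
    simp [coeff_X, coeff_C, coeff_one] at h₀ h₂
    exact h2 (by linear_combination -h₀ - h₂)

/-- `v = (1 / X - 1) / 2` for each coordinate `X` of the conic point of slope `t`. -/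
noncomputable def slopeSolution (a b t : R) : R × R :=
  ((t ^ 2 + 1 - conicNumX a b t) * Ring.inverse (2 * conicNumX a b t),
    (t ^ 2 + 1 - conicNumY a b t) * Ring.inverse (2 * conicNumY a b t))

theorem two_mul_sub_mul_inverse_add_one_mul {q x : R} (h2 : IsUnit (2 : R)) (hx : IsUnit x) :
    (2 * ((q - x) * Ring.inverse (2 * x)) + 1) * x = q := by
  linear_combination (q - x) * Ring.mul_inverse_cancel _ (h2.mul hx)

theorem isUnit_eval_slopeObstruction_iff {a b t : R} :
    IsUnit ((slopeObstruction a b).eval t) ↔ IsUnit (t ^ 2 + 1) ∧ IsUnit (a * t + b) ∧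
      IsUnit (conicNumX a b t) ∧ IsUnit (conicNumX a b t - (t ^ 2 + 1)) ∧
      IsUnit (conicNumY a b t) ∧ IsUnit (conicNumY a b t - (t ^ 2 + 1)) := by
  simp only [eval_slopeObstruction, IsUnit.mul_iff, and_assoc]

theorem slopeSolution_spec {a b t : R} (h2 : IsUnit (2 : R))
    (ht : IsUnit ((slopeObstruction a b).eval t)) :
    (2 * (slopeSolution a b t).1 + 1) * conicNumX a b t = t ^ 2 + 1 ∧
      (2 * (slopeSolution a b t).2 + 1) * conicNumY a b t = t ^ 2 + 1 := by
  obtain ⟨-, -, hX, -, hY, -⟩ := isUnit_eval_slopeObstruction_iff.mp ht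
  exact ⟨two_mul_sub_mul_inverse_add_one_mul h2 hX, two_mul_sub_mul_inverse_add_one_mul h2 hY⟩

theorem isSolution_slopeSolution {a b t : R} (h2 : IsUnit (2 : R)) (hab : 3 * (a ^ 2 + b ^ 2) = -1)
    (ht : IsUnit ((slopeObstruction a b).eval t)) :
    IsSolution (slopeSolution a b t) ∧ IsUnit (2 * (slopeSolution a b t).1 + 1) := by
  obtain ⟨hq, -, hX, hXq, hY, hYq⟩ := isUnit_eval_slopeObstruction_iff.mp ht
  obtain ⟨h₁, h₂⟩ := slopeSolution_spec h2 ht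
  refine ⟨⟨?_, ?_, ?_⟩, isUnit_of_mul_isUnit_left (h₁ ▸ hq)⟩
  · exact (neg_sub (conicNumX a b t) _ ▸ hXq.neg).mul (isUnit_ringInverse.mpr (h2.mul hX))
  · exact (neg_sub (conicNumY a b t) _ ▸ hYq.neg).mul (isUnit_ringInverse.mpr (h2.mul hY))
  · rw [show ∀ v w : R, 16 * ((v ^ 2 + v + 1) * (w ^ 2 + w + 1)) =
      ((2 * v + 1) ^ 2 + 3) * ((2 * w + 1) ^ 2 + 3) from fun v w => by ring]
    refine sq_add_three_mul_sq_add_three_eq_nine hX hY h₁ h₂ ?_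
    linear_combination 3 * conicNumX_sq_add_conicNumY_sq a b t + (t ^ 2 + 1) ^ 2 * hab

theorem injOn_slopeSolution {a b : R} (h2 : IsUnit (2 : R)) :
    Set.InjOn (slopeSolution a b) {t | IsUnit ((slopeObstruction a b).eval t)} := by
  intro t₁ ht₁ t₂ ht₂ h
  obtain ⟨hq₁, -, hX₁, -, hY₁, -⟩ := isUnit_eval_slopeObstruction_iff.mp ht₁
  obtain ⟨-, hl₂, hX₂, -, hY₂, -⟩ := isUnit_eval_slopeObstruction_iff.mp ht₂
  obtain ⟨hx₁, hy₁⟩ := slopeSolution_spec h2 ht₁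
  obtain ⟨hx₂, hy₂⟩ := slopeSolution_spec h2 ht₂
  rw [h] at hx₁ hy₁
  exact eq_of_conicNum_cross_mul_eq
    (by linear_combination conicNumX a b t₁ * hx₂ - conicNumX a b t₂ * hx₁)
    (by linear_combination conicNumY a b t₁ * hy₂ - conicNumY a b t₂ * hy₁)
    ((h2.mul hq₁).mul hl₂)

end Conic

namespace ZMod

section

variable {ℓ : ℕ}

local notation "π" => castHom (dvd_pow_self ℓ two_ne_zero) (ZMod ℓ)

theorem card_filter_castHom_comp [NeZero ℓ] (Q : ZMod ℓ → Prop) [DecidablePred Q] :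
    #{z : ZMod (ℓ ^ 2) | Q (π z)} = ℓ * #{c | Q c} := by
  have hsurj := ringHom_surjective π
  have hker := AddMonoidHom.card_filter_comp_eq_mul _ hsurj (fun _ => True)
  simp only [filter_true_of_mem, mem_univ, implies_true, card_univ, card, pow_two] at hker
  rw [AddMonoidHom.card_filter_comp_eq_mul _ hsurj Q,
    ← Nat.eq_of_mul_eq_mul_right (Nat.pos_of_neZero ℓ) hker]

theorem card_filter_castHom_eq_and_castHom_eq [NeZero ℓ] (c : ZMod ℓ) :
    #{v : ZMod (ℓ ^ 2) × ZMod (ℓ ^ 2) | π v.1 = c ∧ π v.2 = c} = ℓ * ℓ := by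
  have hprod : ({v | π v.1 = c ∧ π v.2 = c} : Finset (ZMod (ℓ ^ 2) × ZMod (ℓ ^ 2))) =
      ({z | π z = c} : Finset (ZMod (ℓ ^ 2))) ×ˢ ({z | π z = c} : Finset (ZMod (ℓ ^ 2))) := by
    ext
    simp only [mem_filter, mem_product, mem_univ, true_and]
  rw [hprod, card_product, card_filter_castHom_comp (· = c), filter_eq', if_pos (mem_univ _),
    card_singleton, mul_one]

variable [Fact ℓ.Prime]

theorem exists_three_mul_sq_add_sq_eq_neg_one (h2 : (2 : ZMod ℓ) ≠ 0) (h3 : (3 : ZMod ℓ) ≠ 0) :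
    ∃ a b : ZMod (ℓ ^ 2), 3 * (a ^ 2 + b ^ 2) = -1 ∧ π b ≠ 0 := by
  have hu := isUnit_iff_castHom_ne_zero (p := ℓ) two_ne_zero
  obtain ⟨a₀, b₀, hab₀, hb₀⟩ : ∃ a₀ b₀ : ZMod ℓ, a₀ ^ 2 + b₀ ^ 2 = -3⁻¹ ∧ b₀ ≠ 0 := by
    obtain ⟨a₀, b₀, h⟩ := sq_add_sq ℓ (-3⁻¹)
    by_cases hb₀ : b₀ = 0
    · refine ⟨b₀, a₀, by linear_combination h, fun ha₀ => h3 ?_⟩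
      simpa [ha₀, hb₀] using h
    · exact ⟨a₀, b₀, h, hb₀⟩
  obtain ⟨a, rfl⟩ := ringHom_surjective π a₀
  obtain ⟨r, rfl⟩ := ringHom_surjective π b₀
  obtain ⟨i, hi⟩ := ((hu 3).mpr (by simpa [map_ofNat] using h3)).exists_right_inv
  have hπi : π i = 3⁻¹ := by
    have := congrArg π hi
    rw [map_mul, map_ofNat, map_one] at this
    exact eq_inv_of_mul_eq_one_right this
  have hπd : π (-i - a ^ 2 - r ^ 2) = 0 := by
    simp only [map_sub, map_neg, map_pow, hπi]
    linear_combination -hab₀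
  have h2r : IsUnit (2 * r) := (hu _).mpr (by rw [map_mul, map_ofNat]; exact mul_ne_zero h2 hb₀)
  obtain ⟨e, he⟩ :=
    exists_add_mul_sq_eq_sq_add h2r (pow_eq_zero_of_castHom_eq_zero two_ne_zero hπd)
  refine ⟨a, r + (-i - a ^ 2 - r ^ 2) * e, by linear_combination 3 * he - hi, ?_⟩
  rwa [map_add, map_mul, hπd, zero_mul, add_zero]

open Classical in
theorem mul_self_le_card_isUnit_eval_slopeObstruction_add (h2 : (2 : ZMod ℓ) ≠ 0)
    {a b : ZMod (ℓ ^ 2)} (hb : π b ≠ 0) :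
    ℓ * ℓ ≤ #{t | IsUnit ((slopeObstruction a b).eval t)} + 11 * ℓ := by
  have hcard : #{t | IsUnit ((slopeObstruction a b).eval t)} =
      ℓ * #{τ | (slopeObstruction (π a) (π b)).eval τ ≠ 0} := by
    simp only [isUnit_iff_castHom_ne_zero two_ne_zero, map_eval_slopeObstruction]
    exact card_filter_castHom_comp fun τ => (slopeObstruction (π a) (π b)).eval τ ≠ 0
  have hroots := card_le_card_filter_eval_ne_zero_add (slopeObstruction_ne_zero (a := π a) h2 hb)
  have hdeg := natDegree_slopeObstruction_le (π a) (π b)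
  rw [card] at hroots
  rw [hcard]
  nlinarith

theorem castHom_two_mul_add_one_eq_zero (h2 : (2 : ZMod ℓ) ≠ 0) {z : ZMod (ℓ ^ 2)}
    (hz : π z = -2⁻¹) : π (2 * z + 1) = 0 := by
  rw [map_add, map_mul, hz, map_ofNat, map_one, mul_neg, mul_inv_cancel₀ h2, neg_add_cancel]

theorem isSolution_of_castHom_eq (h2 : (2 : ZMod ℓ) ≠ 0) {v : ZMod (ℓ ^ 2) × ZMod (ℓ ^ 2)}
    (h₁ : π v.1 = -2⁻¹) (h₂ : π v.2 = -2⁻¹) : IsSolution v := by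
  have hx := pow_eq_zero_of_castHom_eq_zero two_ne_zero (castHom_two_mul_add_one_eq_zero h2 h₁)
  have hy := pow_eq_zero_of_castHom_eq_zero two_ne_zero (castHom_two_mul_add_one_eq_zero h2 h₂)
  have hu : ∀ z : ZMod (ℓ ^ 2), π z = -2⁻¹ → IsUnit z := fun z hz =>
    (isUnit_iff_castHom_ne_zero two_ne_zero z).mpr (by simpa [hz] using h2)
  exact ⟨hu _ h₁, hu _ h₂, by linear_combination ((2 * v.2 + 1) ^ 2 + 3) * hx + 3 * hy⟩

open Classical in
theorem two_mul_sq_le_card_isSolution_add (h2 : (2 : ZMod ℓ) ≠ 0) (h3 : (3 : ZMod ℓ) ≠ 0) :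
    2 * ℓ ^ 2 ≤ #{v : ZMod (ℓ ^ 2) × ZMod (ℓ ^ 2) | IsSolution v} + 11 * ℓ := by
  have h2u : IsUnit (2 : ZMod (ℓ ^ 2)) :=
    (isUnit_iff_castHom_ne_zero two_ne_zero 2).mpr (by rwa [map_ofNat])
  obtain ⟨a, b, hab, hb⟩ := exists_three_mul_sq_add_sq_eq_neg_one h2 h3
  set G : Finset (ZMod (ℓ ^ 2)) := {t | IsUnit ((slopeObstruction a b).eval t)}
  set D : Finset (ZMod (ℓ ^ 2) × ZMod (ℓ ^ 2)) := {v | π v.1 = -2⁻¹ ∧ π v.2 = -2⁻¹}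
  have hdisj : Disjoint D (G.image (slopeSolution a b)) := by
    simp only [disjoint_right, mem_image, mem_filter, mem_univ, true_and, G, D, not_and]
    rintro _ ⟨t, ht, rfl⟩ h₁ -
    exact (isUnit_iff_castHom_ne_zero two_ne_zero _).mp (isSolution_slopeSolution h2u hab ht).2
      (castHom_two_mul_add_one_eq_zero h2 h₁)
  have hsub : D ∪ G.image (slopeSolution a b) ⊆ ({v | IsSolution v} : Finset _) := by
    refine union_subset (fun v hv => ?_) (fun v hv => ?_)
    · simp only [D, mem_filter, mem_univ, true_and] at hv ⊢
      exact isSolution_of_castHom_eq h2 hv.1 hv.2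
    · obtain ⟨t, ht, rfl⟩ := mem_image.mp hv
      simp only [G, mem_filter, mem_univ, true_and] at ht ⊢
      exact (isSolution_slopeSolution h2u hab ht).1
  calc 2 * ℓ ^ 2 ≤ #D + #G + 11 * ℓ := by
        rw [card_filter_castHom_eq_and_castHom_eq]
        nlinarith [mul_self_le_card_isUnit_eval_slopeObstruction_add (a := a) h2 hb]
    _ = #(D ∪ G.image (slopeSolution a b)) + 11 * ℓ := by
      rw [card_union_of_disjoint hdisj,
        card_image_of_injOn (by simpa [G] using injOn_slopeSolution h2u)]
    _ ≤ _ := by gcongr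

end

end ZMod

theorem isSolution_natCast_iff (ℓ m₁ m₂ : ℕ) :
    IsSolution ((m₁ : ZMod (ℓ ^ 2)), (m₂ : ZMod (ℓ ^ 2))) ↔ m₁.Coprime ℓ ∧ m₂.Coprime ℓ ∧
      16 * ((m₁ ^ 2 + m₁ + 1) * (m₂ ^ 2 + m₂ + 1)) % ℓ ^ 2 = 9 % ℓ ^ 2 := by
  rw [IsSolution, ZMod.isUnit_iff_coprime, ZMod.isUnit_iff_coprime,
    Nat.coprime_pow_right_iff two_pos, Nat.coprime_pow_right_iff two_pos,
    ← ZMod.natCast_eq_natCast_iff']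
  push_cast
  rfl

open Classical in
theorem card_filter_coprime_eq_card_isSolution (ℓ : ℕ) [NeZero ℓ] :
    #{m ∈ range (ℓ ^ 2) ×ˢ range (ℓ ^ 2) | m.1.Coprime ℓ ∧ m.2.Coprime ℓ ∧
        16 * ((m.1 ^ 2 + m.1 + 1) * (m.2 ^ 2 + m.2 + 1)) % ℓ ^ 2 = 9 % ℓ ^ 2} =
      #{v : ZMod (ℓ ^ 2) × ZMod (ℓ ^ 2) | IsSolution v} := by
  refine card_nbij' (fun m => ((m.1 : ZMod (ℓ ^ 2)), (m.2 : ZMod (ℓ ^ 2))))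
    (fun v => (v.1.val, v.2.val)) ?_ ?_ ?_ ?_
  · intro m hm
    simp only [coe_filter, mem_product, mem_range, Set.mem_ofPred_eq, mem_univ, true_and] at hm ⊢
    exact (isSolution_natCast_iff ℓ m.1 m.2).mpr hm.2
  · intro v hv
    simp only [coe_filter, mem_product, mem_range, Set.mem_ofPred_eq, mem_univ, true_and] at hv ⊢
    refine ⟨⟨ZMod.val_lt _, ZMod.val_lt _⟩, (isSolution_natCast_iff ℓ _ _).mp ?_⟩
    simpa only [ZMod.natCast_zmod_val] using hv
  · intro m hm
    simp only [coe_filter, mem_product, mem_range, Set.mem_ofPred_eq] at hm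
    simp only [ZMod.val_cast_of_lt hm.1.1, ZMod.val_cast_of_lt hm.1.2]
  · intro v _
    simp only [ZMod.natCast_zmod_val]

theorem two_mul_sq_mul_one_sub_le {ℓ N : ℝ} (hℓ : 1 ≤ ℓ) (h : 2 * ℓ ^ 2 ≤ N + 11 * ℓ) :
    2 * ℓ ^ 2 * (1 - 6 / √ℓ) ≤ N := by
  have hs : 1 ≤ √ℓ := Real.one_le_sqrt.mpr hℓ
  calc 2 * ℓ ^ 2 * (1 - 6 / √ℓ) = 2 * ℓ ^ 2 - 12 * ℓ * (ℓ / √ℓ) := by ring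
    _ = 2 * ℓ ^ 2 - 12 * ℓ * √ℓ := by rw [Real.div_sqrt]
    _ ≤ N := by nlinarith

theorem stmt13 :
    ∃ C : ℝ, ∀ ℓ : ℕ, ℓ.Prime → 5 ≤ ℓ →
      (2 * (ℓ : ℝ) ^ 2) * (1 - C / Real.sqrt ℓ) ≤
        (((Finset.range (ℓ ^ 2) ×ˢ Finset.range (ℓ ^ 2)).filter
          (fun p =>
            Nat.Coprime p.1 ℓ ∧ Nat.Coprime p.2 ℓ ∧
            (16 * ((p.1 ^ 2 + p.1 + 1) * (p.2 ^ 2 + p.2 + 1))) % ℓ ^ 2 = 9 % ℓ ^ 2)).card : ℝ) := by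
  refine ⟨6, fun ℓ hℓ h5 => ?_⟩
  have := Fact.mk hℓ
  have hsmall : ∀ n : ℕ, 0 < n → n < ℓ → (n : ZMod ℓ) ≠ 0 := fun n h0 hn => by
    rw [ne_eq, ZMod.natCast_eq_zero_iff]
    exact Nat.not_dvd_of_pos_of_lt h0 hn
  have hcount := ZMod.two_mul_sq_le_card_isSolution_add (ℓ := ℓ)
    (by exact_mod_cast hsmall 2 two_pos (by omega))
    (by exact_mod_cast hsmall 3 three_pos (by omega))
  rw [card_filter_coprime_eq_card_isSolution]
  exact two_mul_sq_mul_one_sub_le (by exact_mod_cast hℓ.one_lt.le) (by exact_mod_cast hcount)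
end

section
/- For every prime ℓ ≥ 5, the polynomial (X² + 3)(Y² + 3) − 9 is irreducible in F̄_ℓ[X, Y], where F̄_ℓ is an algebraic closure of the field with ℓ elements; that is, the polynomial is absolutely irreducible over F_ℓ. -/
/-!
As a polynomial in `X 0` over `k[X 1]`, `(X 0 ^ 2 + 3) * (X 1 ^ 2 + 3) - 9` is
`(Y ^ 2 + 3) X ^ 2 + 3 Y ^ 2` with `Y = X 1`. Its reversal `3 Y ^ 2 X ^ 2 + (Y ^ 2 + 3)` is
Eisenstein at any prime factor of `Y ^ 2 + 3`, which is squarefree when `2` and `3` are invertible,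
and its coefficients are coprime since `3 (Y ^ 2 + 3) - 3 Y ^ 2 = 9`. Reversal preserves
irreducibility.
-/

namespace Polynomial

variable {R : Type*}

section Mirror

variable [Semiring R]

theorem mirror_C_mul_X_pow_add_C {a c : R} {n : ℕ} (hn : 0 < n) (ha : a ≠ 0) (hc : c ≠ 0) :
    (C a * X ^ n + C c).mirror = C c * X ^ n + C a := by
  have hdeg : (C a * X ^ n + C c).natDegree = n := by
    rw [natDegree_add_C, natDegree_C_mul_X_pow n a ha]
  have htrail : (C a * X ^ n + C c).natTrailingDegree = 0 :=
    natTrailingDegree_eq_zero.mpr (Or.inr (by simpa [hn.ne] using hc))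
  rw [mirror, htrail, pow_zero, mul_one, reverse, hdeg, reflect_add, reflect_C_mul_X_pow,
    reflect_C, revAt_le le_rfl, Nat.sub_self, pow_zero, mul_one, add_comm]

variable [NoZeroDivisors R]

theorem isUnit_mirror_iff {p : R[X]} : IsUnit p.mirror ↔ IsUnit p := by
  suffices h : ∀ q : R[X], IsUnit q → IsUnit q.mirror from
    ⟨fun hp => p.mirror_mirror ▸ h _ hp, h p⟩
  intro q hq
  obtain ⟨r, hr, rfl⟩ := isUnit_iff.mp hq
  rwa [mirror_C, isUnit_C]

theorem irreducible_mirror_iff {p : R[X]} : Irreducible p.mirror ↔ Irreducible p := by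
  suffices h : ∀ q : R[X], Irreducible q → Irreducible q.mirror from
    ⟨fun hp => p.mirror_mirror ▸ h _ hp, h p⟩
  refine fun q hq => ⟨fun h => hq.not_isUnit (isUnit_mirror_iff.mp h), fun g h hgh => ?_⟩
  simpa only [isUnit_mirror_iff] using hq.isUnit_or_isUnit
    (show q = g.mirror * h.mirror by rw [← mirror_mul_of_domain, ← hgh, mirror_mirror])

end Mirror

section Eisenstein

variable [CommRing R] [IsDomain R]

theorem irreducible_C_mul_X_pow_add_C_of_prime {π a c : R} {n : ℕ} (hn : 0 < n) (hπ : Prime π)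
    (hc : π ∣ c) (hc2 : ¬π ^ 2 ∣ c) (hac : IsRelPrime a c) :
    Irreducible (C a * X ^ n + C c) := by
  have ha : ¬π ∣ a := fun ha => hπ.not_isUnit (hac ha hc)
  have ha0 : a ≠ 0 := by rintro rfl; exact ha (dvd_zero π)
  have hdeg : (C a * X ^ n + C c).natDegree = n := by
    rw [natDegree_add_C, natDegree_C_mul_X_pow n a ha0]
  have hcoeff : ∀ m < n, (C a * X ^ n + C c).coeff m = if m = 0 then c else 0 := by
    intro m hm
    simp [coeff_C, hm.ne]
  refine irreducible_of_eisenstein_criterion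
    ((Ideal.span_singleton_prime hπ.ne_zero).mpr hπ) ?_ ?_ ?_ ?_ ?_
  · rwa [leadingCoeff, hdeg, coeff_add, coeff_C_mul_X_pow,
      if_pos rfl, coeff_C, if_neg hn.ne', add_zero, Ideal.mem_span_singleton]
  · intro m hm
    rw [coe_lt_degree, hdeg] at hm
    rw [hcoeff m hm, Ideal.mem_span_singleton]
    split_ifs
    exacts [hc, dvd_zero π]
  · rwa [← natDegree_pos_iff_degree_pos, hdeg]
  · rwa [hcoeff 0 hn, if_pos rfl, Ideal.span_singleton_pow, Ideal.mem_span_singleton]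
  · intro r hr
    rw [C_dvd_iff_dvd_coeff] at hr
    refine hac ?_ ?_
    · simpa [coeff_C, hn.ne'] using hr n
    · simpa [hn.ne] using hr 0

theorem irreducible_C_mul_X_pow_add_C_of_squarefree [UniqueFactorizationMonoid R] {a c : R}
    {n : ℕ} (hn : 0 < n) (ha : Squarefree a) (ha1 : ¬IsUnit a) (hac : IsRelPrime a c) :
    Irreducible (C a * X ^ n + C c) := by
  obtain ⟨π, hπ, hπa⟩ := WfDvdMonoid.exists_irreducible_factor ha1 ha.ne_zero
  have hc : c ≠ 0 := by rintro rfl; exact ha1 (isRelPrime_zero_right.mp hac)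
  rw [← mirror_C_mul_X_pow_add_C hn hc ha.ne_zero, irreducible_mirror_iff]
  exact irreducible_C_mul_X_pow_add_C_of_prime hn
    (UniqueFactorizationMonoid.irreducible_iff_prime.mp hπ) hπa
    (fun h => hπ.not_isUnit (ha π (by rwa [← sq]))) hac.symm

end Eisenstein

theorem irreducible_C_X_sq_add_three_mul_X_sq_add_C_three_mul_X_sq {k : Type*}
    [Field k] (h2 : (2 : k) ≠ 0) (h3 : (3 : k) ≠ 0) :
    Irreducible (C (X ^ 2 + 3) * X ^ 2 + C (3 * X ^ 2) : k[X][X]) := by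
  have h3u : IsUnit (3 : k[X]) := map_ofNat (C : k →+* k[X]) 3 ▸ isUnit_C.mpr h3.isUnit
  have hsep : (X ^ 2 + 3 : k[X]).Separable := by
    have := separable_X_pow_sub_C (n := 2) (-3 : k) (by exact_mod_cast h2) (neg_ne_zero.mpr h3)
    rwa [map_neg, sub_neg_eq_add, map_ofNat] at this
  have hcop : IsRelPrime (X ^ 2 + 3 : k[X]) (3 * X ^ 2) := by
    rw [isRelPrime_mul_unit_left_right h3u, add_comm]
    simpa using h3u.isRelPrime_left.add_mul_left_left (y := (X ^ 2 : k[X])) 1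
  exact irreducible_C_mul_X_pow_add_C_of_squarefree two_pos hsep.squarefree
    (not_isUnit_of_natDegree_pos _ (by
      rw [show (X ^ 2 + 3 : k[X]).natDegree = 2 by compute_degree!]; exact two_pos)) hcop

end Polynomial

open Polynomial MvPolynomial in
theorem MvPolynomial.irreducible_X_sq_add_three_mul_X_sq_add_three_sub_nine {k : Type*}
    [Field k] (h2 : (2 : k) ≠ 0) (h3 : (3 : k) ≠ 0) :
    Irreducible ((X 0 ^ 2 + 3) * (X 1 ^ 2 + 3) - 9 : MvPolynomial (Fin 2) k) := by
  let e : MvPolynomial (Fin 2) k ≃ₐ[k] k[X][X] :=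
    (finSuccEquiv k 1).trans (Polynomial.mapAlgEquiv (uniqueAlgEquiv k (Fin 1)))
  have he0 : e (X 0) = Polynomial.X := by simp [e, finSuccEquiv_X_zero]
  have he1 : e (X 1) = Polynomial.C Polynomial.X := by
    rw [AlgEquiv.trans_apply, ← Fin.succ_zero_eq_one, finSuccEquiv_X_succ]
    simp
  have he : e ((X 0 ^ 2 + 3) * (X 1 ^ 2 + 3) - 9) =
      Polynomial.C (Polynomial.X ^ 2 + 3) * Polynomial.X ^ 2
        + Polynomial.C (3 * Polynomial.X ^ 2) := by
    simp only [map_sub, map_mul, map_add, map_pow, map_ofNat, he0, he1]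
    ring
  rw [← MulEquiv.irreducible_iff e, he]
  exact irreducible_C_X_sq_add_three_mul_X_sq_add_C_three_mul_X_sq h2 h3

open MvPolynomial in
theorem stmt14 (ℓ : ℕ) [Fact ℓ.Prime] (h5 : 5 ≤ ℓ) :
    Irreducible ((X 0 ^ 2 + 3) * (X 1 ^ 2 + 3) - 9 :
      MvPolynomial (Fin 2) (AlgebraicClosure (ZMod ℓ))) := by
  have h2 := CharP.cast_ne_zero_of_ne_of_prime (AlgebraicClosure (ZMod ℓ)) Nat.prime_two
    (show ℓ ≠ 2 by omega)
  have h3 := CharP.cast_ne_zero_of_ne_of_prime (AlgebraicClosure (ZMod ℓ)) Nat.prime_three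
    (show ℓ ≠ 3 by omega)
  push_cast at h2 h3
  exact irreducible_X_sq_add_three_mul_X_sq_add_three_sub_nine h2 h3
end
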